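/- In Tzafriri's space Y = Ti(2;1/2), for every n ≥ 4, ∥∑_{i=1}^n e_i∥ = √n/2, where (e_i) is the unit vector basis. -/

import Mathlib

/-!
The norm of `Ti(2; 1/2)` is dominated by the `ℓ²` norm. By induction on the size of the
support: an admissible average of `x` either has a single block `E_j` carrying all of `x`, and
is then at most `‖x‖/2`, or cuts `x` into pieces with smaller support, and is then at most
`‖x‖₂/2` by the induction hypothesis and Cauchy–Schwarz. For `x = e_0 + ⋯ + e_{n-1}` every
average is therefore at most `√n/2`, while the split into singletons, each of norm `1`,
attains `√n/2`; for `n ≥ 4` this dominates `‖x‖_∞ = 1`.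
-/

open Finset

noncomputable def l2Norm {α : Type*} (x : α →₀ ℝ) : ℝ :=
  √(x.sum fun _ a => a ^ 2)

section L2

variable {α : Type*} (x : α →₀ ℝ)

lemma l2Norm_nonneg : 0 ≤ l2Norm x := Real.sqrt_nonneg _

lemma sq_l2Norm : l2Norm x ^ 2 = x.sum fun _ a => a ^ 2 :=
  Real.sq_sqrt (Finset.sum_nonneg fun _ _ => sq_nonneg _)

lemma sum_single_one_apply [DecidableEq α] (s : Finset α) (a : α) :
    (∑ i ∈ s, Finsupp.single i (1 : ℝ)) a = if a ∈ s then 1 else 0 := by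
  simp [Finsupp.finsetSum_apply, Finsupp.single_apply]

lemma l2Norm_sum_single_one [DecidableEq α] (s : Finset α) :
    l2Norm (∑ i ∈ s, Finsupp.single i (1 : ℝ)) = √(#s : ℝ) := by
  have hsupp : (∑ i ∈ s, Finsupp.single i (1 : ℝ)).support ⊆ s := fun a ha => by
    by_contra h
    simp [sum_single_one_apply, h] at ha
  rw [l2Norm, Finsupp.sum_of_support_subset _ hsupp _ fun _ _ => by norm_num]
  simp [sum_single_one_apply]

lemma l2Norm_single (i : α) (c : ℝ) : l2Norm (Finsupp.single i c) = |c| := by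
  rw [l2Norm, Finsupp.sum_single_index (by norm_num), Real.sqrt_sq_eq_abs]

lemma abs_apply_le_l2Norm (i : α) : |x i| ≤ l2Norm x := by
  rw [← Real.sqrt_sq_eq_abs]
  refine Real.sqrt_le_sqrt ?_
  by_cases hi : i ∈ x.support
  · exact Finset.single_le_sum (f := fun a => x a ^ 2) (fun _ _ => sq_nonneg _) hi
  · rw [Finsupp.notMem_support_iff.1 hi, sq, zero_mul]
    exact Finset.sum_nonneg fun _ _ => sq_nonneg _

lemma sum_sq_l2Norm_filter_le {ι : Type*} [Fintype ι] [DecidableEq α] {E : ι → Finset α}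
    (hE : Pairwise fun i j => Disjoint (E i) (E j)) :
    ∑ i, l2Norm (x.filter (· ∈ E i)) ^ 2 ≤ l2Norm x ^ 2 := by
  simp only [sq_l2Norm, Finsupp.sum_filter_index, Finsupp.support_filter]
  rw [← Finset.sum_biUnion]
  · refine Finset.sum_le_sum_of_subset_of_nonneg ?_ fun _ _ _ => sq_nonneg _
    exact Finset.biUnion_subset.2 fun i _ => Finset.filter_subset _ _
  · intro i _ j _ hij
    exact Finset.disjoint_left.2 fun a hai haj =>
      Finset.disjoint_left.1 (hE hij) (Finset.mem_filter.1 hai).2 (Finset.mem_filter.1 haj).2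

lemma sum_l2Norm_filter_le {ι : Type*} [Fintype ι] [DecidableEq α] {E : ι → Finset α}
    (hE : Pairwise fun i j => Disjoint (E i) (E j)) :
    ∑ i, l2Norm (x.filter (· ∈ E i)) ≤ √(Fintype.card ι) * l2Norm x := by
  rw [← Real.sqrt_sq (l2Norm_nonneg x), ← Real.sqrt_mul (Nat.cast_nonneg _),
    Real.le_sqrt (Finset.sum_nonneg fun _ _ => l2Norm_nonneg _) (by positivity)]
  calc (∑ i, l2Norm (x.filter (· ∈ E i))) ^ 2
      ≤ Fintype.card ι * ∑ i, l2Norm (x.filter (· ∈ E i)) ^ 2 := sq_sum_le_card_mul_sum_sq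
    _ ≤ Fintype.card ι * l2Norm x ^ 2 := by gcongr; exact sum_sq_l2Norm_filter_le x hE

end L2

def Successive {n : ℕ} (E : Fin n → Finset ℕ) : Prop :=
  ∀ i j : Fin n, i < j → ∀ a ∈ E i, ∀ b ∈ E j, a < b

lemma Successive.pairwise_disjoint {n : ℕ} {E : Fin n → Finset ℕ} (hE : Successive E) :
    Pairwise fun i j => Disjoint (E i) (E j) := by
  intro i j hij
  refine Finset.disjoint_left.2 fun a hai haj => ?_
  rcases hij.lt_or_gt with h | h
  · exact lt_irrefl a (hE i j h a hai a haj)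
  · exact lt_irrefl a (hE j i h a haj a hai)

def tzafririAverages (N : (ℕ →₀ ℝ) → ℝ) (x : ℕ →₀ ℝ) : Set ℝ :=
  {s | ∃ n : ℕ, ∃ E : Fin n → Finset ℕ, Successive E ∧
    s = (1 / (2 * Real.sqrt n)) * ∑ i, N (x.filter (· ∈ E i))}

/-- The implicit equation for the norm of Tzafriri's space `Ti(2; 1/2)`. -/
def IsTzafririNorm (N : (ℕ →₀ ℝ) → ℝ) : Prop :=
  ∀ x, N x = max (⨆ i, |x i|) (sSup (tzafririAverages N x))

lemma zero_mem_tzafririAverages (N : (ℕ →₀ ℝ) → ℝ) (x : ℕ →₀ ℝ) : 0 ∈ tzafririAverages N x :=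
  ⟨0, finZeroElim, finZeroElim, by simp⟩

lemma average_le_half_l2Norm {N : (ℕ →₀ ℝ) → ℝ} (x : ℕ →₀ ℝ) {n : ℕ} {E : Fin n → Finset ℕ}
    (hE : Successive E) (hN : ∀ i, N (x.filter (· ∈ E i)) ≤ l2Norm (x.filter (· ∈ E i))) :
    1 / (2 * √n) * ∑ i, N (x.filter (· ∈ E i)) ≤ l2Norm x / 2 := by
  rcases n.eq_zero_or_pos with rfl | hn
  · simpa using div_nonneg (l2Norm_nonneg x) zero_le_two
  have hsqrt : 0 < √(n : ℝ) := Real.sqrt_pos.2 (by exact_mod_cast hn)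
  calc 1 / (2 * √n) * ∑ i, N (x.filter (· ∈ E i))
      ≤ 1 / (2 * √n) * (√n * l2Norm x) := by
        gcongr
        refine (Finset.sum_le_sum fun i _ => hN i).trans ?_
        simpa using sum_l2Norm_filter_le x hE.pairwise_disjoint
    _ = l2Norm x / 2 := by field_simp

namespace IsTzafririNorm

variable {N : (ℕ →₀ ℝ) → ℝ} (hN : IsTzafririNorm N)
include hN

lemma nonneg (x : ℕ →₀ ℝ) : 0 ≤ N x := by
  rw [hN x]
  exact le_max_of_le_left (Real.iSup_nonneg fun i => abs_nonneg _)

lemma map_zero : N 0 = 0 := by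
  -- sixteen copies of `∅` average to `16 N 0 / (2 √16) = 2 N 0`
  have hmem : 2 * N 0 ∈ tzafririAverages N 0 := by
    refine ⟨16, fun _ => ∅, fun _ _ _ _ ha => absurd ha (Finset.notMem_empty _), ?_⟩
    rw [show √((16 : ℕ) : ℝ) = 4 by norm_num [show (16 : ℝ) = 4 ^ 2 by norm_num]]
    simp only [Finsupp.filter_zero, Finset.sum_const, Finset.card_univ, Fintype.card_fin,
      nsmul_eq_mul]
    ring
  by_cases hbdd : BddAbove (tzafririAverages N 0)
  · have h2 : 2 * N 0 ≤ N 0 := (le_csSup hbdd hmem).trans ((hN 0).ge.trans' (le_max_right _ _))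
    linarith [hN.nonneg 0]
  · simpa [Real.sSup_of_not_bddAbove hbdd] using hN 0

lemma abs_apply_le (x : ℕ →₀ ℝ) (i : ℕ) : |x i| ≤ N x :=
  (le_ciSup ⟨l2Norm x, by rintro _ ⟨j, rfl⟩; exact abs_apply_le_l2Norm x j⟩ i).trans
    ((hN x).ge.trans' (le_max_left _ _))

lemma sum_filter_eq_of_support_subset {n : ℕ} {E : Fin n → Finset ℕ} (hE : Successive E)
    {x : ℕ →₀ ℝ} {j : Fin n} (hj : x.support ⊆ E j) :
    ∑ i, N (x.filter (· ∈ E i)) = N x := by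
  rw [Finset.sum_eq_single j]
  · rw [(Finsupp.filter_eq_self_iff _ _).2 fun a ha => hj (Finsupp.mem_support_iff.2 ha)]
  · intro i _ hij
    rw [(Finsupp.filter_eq_zero_iff _ _).2 fun a hai => ?_, hN.map_zero]
    by_contra ha
    exact Finset.disjoint_left.1 (hE.pairwise_disjoint hij) hai (hj (Finsupp.mem_support_iff.2 ha))
  · simp

lemma le_l2Norm (x : ℕ →₀ ℝ) : N x ≤ l2Norm x := by
  obtain ⟨k, hk⟩ : ∃ k, x.support.card = k := ⟨_, rfl⟩
  induction k using Nat.strong_induction_on generalizing x with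
  | _ k ih =>
  have haverages : ∀ s ∈ tzafririAverages N x, s ≤ max (N x / 2) (l2Norm x / 2) := by
    rintro s ⟨n, E, hE, rfl⟩
    by_cases hcover : ∃ j, x.support ⊆ E j
    · obtain ⟨j, hj⟩ := hcover
      rw [hN.sum_filter_eq_of_support_subset hE hj]
      have h1 : 1 ≤ √(n : ℝ) := Real.one_le_sqrt.2 (by exact_mod_cast j.pos)
      refine le_max_of_le_left ?_
      rw [one_div_mul_eq_div]
      exact div_le_div_of_nonneg_left (hN.nonneg x) two_pos (by linarith)
    · refine le_max_of_le_right (average_le_half_l2Norm x hE fun i => ih _ ?_ _ rfl)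
      rw [← hk]
      exact Finset.card_lt_card
        (Finset.filter_ssubset.2 (Finset.not_subset.1 (not_exists.1 hcover i)))
  have hsup : (⨆ i, |x i|) ≤ l2Norm x := ciSup_le (abs_apply_le_l2Norm x)
  have havg := csSup_le ⟨0, zero_mem_tzafririAverages N x⟩ haverages
  have hle := (hN x).trans_le (max_le_max hsup havg)
  rcases le_max_iff.1 hle with h | h
  · exact h
  · rcases le_max_iff.1 h with h | h <;> linarith [hN.nonneg x, l2Norm_nonneg x]

lemma apply_single (i : ℕ) (c : ℝ) : N (Finsupp.single i c) = |c| :=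
  le_antisymm ((hN.le_l2Norm _).trans_eq (l2Norm_single i c))
    (by simpa using hN.abs_apply_le (Finsupp.single i c) i)

end IsTzafririNorm

theorem stmt5 (N : (ℕ →₀ ℝ) → ℝ)
    (himp : ∀ x : ℕ →₀ ℝ, N x = max (⨆ i : ℕ, |x i|)
      (sSup {s : ℝ | ∃ n : ℕ, ∃ E : Fin n → Finset ℕ,
        (∀ i j : Fin n, i < j → ∀ a ∈ E i, ∀ b ∈ E j, a < b) ∧
        s = (1 / (2 * Real.sqrt n)) * ∑ i, N (x.filter (· ∈ E i))}))
    (n : ℕ) (hn : 4 ≤ n) :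
    N (∑ i ∈ Finset.range n, Finsupp.single i (1 : ℝ)) = Real.sqrt n / 2 := by
  have hN : IsTzafririNorm N := himp
  set x := ∑ i ∈ range n, Finsupp.single i (1 : ℝ)
  have htwo : 2 ≤ √(n : ℝ) := Real.le_sqrt_of_sq_le (by norm_num; exact_mod_cast hn)
  have hsingle (i : Fin n) : N (x.filter (· ∈ ({(i : ℕ)} : Finset ℕ))) = 1 := by
    have : x.filter (· ∈ ({(i : ℕ)} : Finset ℕ)) = Finsupp.single (i : ℕ) (1 : ℝ) := by
      ext a
      simp [x, sum_single_one_apply, Finsupp.single_apply]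
    rw [this, hN.apply_single, abs_one]
  have hgreatest : IsGreatest (tzafririAverages N x) (√n / 2) := by
    refine ⟨⟨n, fun i => {(i : ℕ)}, ?_, ?_⟩, ?_⟩
    · intro i j hij a ha b hb
      rw [Finset.mem_singleton] at ha hb
      exact ha ▸ hb ▸ hij
    · simp only [hsingle, Finset.sum_const, Finset.card_univ, Fintype.card_fin, nsmul_eq_mul,
        mul_one]
      field_simp
      exact Real.sq_sqrt n.cast_nonneg
    · rintro s ⟨m, E, hE, rfl⟩
      simpa [x, l2Norm_sum_single_one] using average_le_half_l2Norm x hE fun i => hN.le_l2Norm _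
  have hsup : (⨆ i, |x i|) ≤ √n / 2 := ciSup_le fun i => by
    rw [sum_single_one_apply]
    split_ifs <;> norm_num <;> linarith
  rw [hN x, hgreatest.csSup_eq, max_eq_right hsup]
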